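/- Suppose for fixed n,M,k there are nodes \alpha_0 < \cdots < \alpha_{k-1} in (-1,1) and positive weights \rho_0,\ldots,\rho_{k-1} such that f_0 = f(1)/M + \sum_{i=0}^{k-1}\rho_i f(\alpha_i) for every polynomial f of degree at most 2k-1. Then the weights satisfy M\rho_0 = -\frac{(1-\alpha_1^2)(1-\alpha_2^2)\cdots(1-\alpha_{k-1}^2)}{\alpha_0(\alpha_0^2-\alpha_1^2)\cdots(\alpha_0^2-\alpha_{k-1}^2)}, provided the odd moments vanish: \int t^{2j+1} d\mu_n = 0 for all j \ge 0 (the case q=2). -/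

import Mathlib

/-- Integral against the binary Krawtchouk orthogonality measure
`μ_n = 2^{-n} ∑_i C(n,i) δ_{-1+2i/n}`. -/
noncomputable def krawInteg2 (n : ℕ) (f : ℝ → ℝ) : ℝ :=
  (1 / (2 : ℝ) ^ n) *
    ∑ i ∈ Finset.range (n + 1), (n.choose i : ℝ) * f (-1 + 2 * (i : ℝ) / n)

/-
Test the quadrature formula on `p(t) = t ∏_{i ≠ 0} (t² - α_i²)`, of degree `2k - 1`. It is
odd, so its integral vanishes with the odd moments, and it vanishes at every node except `α_0`.
The formula thus collapses to `0 = p(1)/M + ρ_0 p(α_0)`, which is the claimed identity.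
-/

open Polynomial

section OddNodePolynomial

variable {R ι : Type*} [CommRing R]

theorem coeff_X_mul_expand_two_eq_zero_of_even (q : R[X]) {j : ℕ} (hj : Even j) :
    (X * expand R 2 q).coeff j = 0 := by
  rcases j with _ | m
  · simp
  · rw [coeff_X_mul, coeff_expand two_pos, if_neg]
    rintro ⟨s, hs⟩
    obtain ⟨r, hr⟩ := hj
    omega

-- `t ∏_{i ∈ s} (t² - a_i²)`, built with `expand` so that its oddness shows on the coefficients
noncomputable def oddNodePoly (a : ι → R) (s : Finset ι) : R[X] :=
  X * expand R 2 (∏ i ∈ s, (X - C (a i ^ 2)))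

theorem eval_oddNodePoly (a : ι → R) (s : Finset ι) (t : R) :
    (oddNodePoly a s).eval t = t * ∏ i ∈ s, (t ^ 2 - a i ^ 2) := by
  simp [oddNodePoly, eval_prod]

theorem natDegree_oddNodePoly_le (a : ι → R) (s : Finset ι) :
    (oddNodePoly a s).natDegree ≤ 2 * s.card + 1 := by
  unfold oddNodePoly
  calc (X * expand R 2 (∏ i ∈ s, (X - C (a i ^ 2)))).natDegree
      ≤ 1 + (∏ i ∈ s, (X - C (a i ^ 2))).natDegree * 2 := by
        grw [natDegree_mul_le, natDegree_X_le, natDegree_expand]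
    _ ≤ 1 + s.card * 2 := by
        grw [natDegree_prod_le,
          Finset.sum_le_card_nsmul _ _ 1 fun i _ => natDegree_X_sub_C_le _, smul_eq_mul, mul_one]
    _ = 2 * s.card + 1 := by ring

theorem coeff_oddNodePoly_eq_zero_of_even (a : ι → R) (s : Finset ι) {j : ℕ} (hj : Even j) :
    (oddNodePoly a s).coeff j = 0 :=
  coeff_X_mul_expand_two_eq_zero_of_even _ hj

end OddNodePolynomial

theorem krawInteg2_eval_eq_sum_coeff_mul_moment (n : ℕ) (p : ℝ[X]) :
    krawInteg2 n (fun t => p.eval t) =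
      ∑ j ∈ Finset.range (p.natDegree + 1), p.coeff j * krawInteg2 n (fun t => t ^ j) := by
  simp only [krawInteg2, eval_eq_sum_range, Finset.mul_sum]
  rw [Finset.sum_comm]
  refine Finset.sum_congr rfl fun j _ => Finset.sum_congr rfl fun i _ => by ring

theorem krawInteg2_eval_eq_zero_of_coeff_even (n : ℕ) (p : ℝ[X])
    (hodd : ∀ j : ℕ, krawInteg2 n (fun t => t ^ (2 * j + 1)) = 0)
    (hcoeff : ∀ j, Even j → p.coeff j = 0) :
    krawInteg2 n (fun t => p.eval t) = 0 := by
  rw [krawInteg2_eval_eq_sum_coeff_mul_moment]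
  refine Finset.sum_eq_zero fun j _ => ?_
  rcases Nat.even_or_odd j with heven | ⟨m, rfl⟩
  · rw [hcoeff j heven, zero_mul]
  · rw [hodd m, mul_zero]

theorem stmt_13_general (n k : ℕ) (hk : 1 ≤ k) (M : ℝ) (hM : 0 < M)
    (α ρ : Fin k → ℝ)
    -- the quadrature formula, where `f_0 = ∫ f dμ_n`:
    (hquad : ∀ p : Polynomial ℝ, p.natDegree ≤ 2 * k - 1 →
      krawInteg2 n (fun t => p.eval t) = p.eval 1 / M + ∑ i, ρ i * p.eval (α i))
    -- the odd moments of `μ_n` vanish (the case `q = 2`):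
    (hodd : ∀ j : ℕ, krawInteg2 n (fun t => t ^ (2 * j + 1)) = 0)
    -- nondegeneracy of the denominators in the formula:
    (h0 : α ⟨0, hk⟩ ≠ 0)
    (hne : ∀ i : Fin k, i ≠ ⟨0, hk⟩ → (α ⟨0, hk⟩) ^ 2 ≠ (α i) ^ 2) :
    M * ρ ⟨0, hk⟩ =
      -(∏ i ∈ Finset.univ.erase ⟨0, hk⟩, (1 - (α i) ^ 2)) /
        (α ⟨0, hk⟩ * ∏ i ∈ Finset.univ.erase ⟨0, hk⟩, ((α ⟨0, hk⟩) ^ 2 - (α i) ^ 2)) := by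
  set i₀ : Fin k := ⟨0, hk⟩
  set S := (Finset.univ : Finset (Fin k)).erase i₀
  set p := oddNodePoly α S
  have hdeg : p.natDegree ≤ 2 * k - 1 := by
    have : p.natDegree ≤ 2 * S.card + 1 := natDegree_oddNodePoly_le α S
    rw [Finset.card_erase_of_mem (Finset.mem_univ _), Finset.card_univ, Fintype.card_fin] at this
    omega
  have hnodes : ∑ i, ρ i * p.eval (α i) = ρ i₀ * p.eval (α i₀) := by
    refine Finset.sum_eq_single i₀ (fun i _ hi => ?_) (by simp)
    rw [eval_oddNodePoly, Finset.prod_eq_zero (Finset.mem_erase.mpr ⟨hi, Finset.mem_univ _⟩)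
      (sub_self _), mul_zero, mul_zero]
  have hquad_p : 0 = p.eval 1 / M + ρ i₀ * p.eval (α i₀) := by
    rw [← hnodes, ← hquad p hdeg, krawInteg2_eval_eq_zero_of_coeff_even n p hodd
      fun j => coeff_oddNodePoly_eq_zero_of_even _ _]
  have hB : ∏ i ∈ S, (α i₀ ^ 2 - α i ^ 2) ≠ 0 :=
    Finset.prod_ne_zero_iff.mpr fun i hi => sub_ne_zero.mpr (hne i (Finset.mem_erase.mp hi).1)
  simp only [p, eval_oddNodePoly, one_pow, one_mul] at hquad_p
  rw [eq_div_iff (mul_ne_zero h0 hB)]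
  field_simp [hM.ne'] at hquad_p
  linear_combination -hquad_p

theorem stmt_13 (n k : ℕ) (hn : 1 ≤ n) (hk : 1 ≤ k) (M : ℝ) (hM : 0 < M)
    (α ρ : Fin k → ℝ) (hmono : StrictMono α) (hα : ∀ i, α i ∈ Set.Ioo (-1 : ℝ) 1)
    (hρ : ∀ i, 0 < ρ i)
    -- the quadrature formula, where `f_0 = ∫ f dμ_n`:
    (hquad : ∀ p : Polynomial ℝ, p.natDegree ≤ 2 * k - 1 →
      krawInteg2 n (fun t => p.eval t) = p.eval 1 / M + ∑ i, ρ i * p.eval (α i))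
    -- the odd moments of `μ_n` vanish (the case `q = 2`):
    (hodd : ∀ j : ℕ, krawInteg2 n (fun t => t ^ (2 * j + 1)) = 0)
    -- nondegeneracy of the denominators in the formula:
    (h0 : α ⟨0, hk⟩ ≠ 0)
    (hne : ∀ i : Fin k, i ≠ ⟨0, hk⟩ → (α ⟨0, hk⟩) ^ 2 ≠ (α i) ^ 2) :
    M * ρ ⟨0, hk⟩ =
      -(∏ i ∈ Finset.univ.erase ⟨0, hk⟩, (1 - (α i) ^ 2)) /
        (α ⟨0, hk⟩ * ∏ i ∈ Finset.univ.erase ⟨0, hk⟩, ((α ⟨0, hk⟩) ^ 2 - (α i) ^ 2)) :=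
  stmt_13_general n k hk M hM α ρ hquad hodd h0 hne
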